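/- Let δ be a cutting arc of a prime non-alternating connected link diagram D on S², lying in a black face B adjacent to white faces W and W′ meeting ∂δ, and let D₁ be obtained by surgery along δ (which joins W and W′ into a single white face W₁). Then every composite circle of D₁ intersects W₁, and every black face of D₁ intersects at most one composite circle of D₁. -/

import Mathlib

/-!
## A combinatorial model of link diagrams

A link diagram on an orientable surface is encoded as a 4-valent ribbon graph:
the crossings form a type `C`, and each crossing carries four *darts* (edge-ends)
`(c, 0), (c, 1), (c, 2), (c, 3)`, numbered counterclockwise around the crossing so
that `{0, 2}` and `{1, 3}` are the two strands passing through the crossing.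
A fixed-point-free involution `edge` pairs the two ends of every edge of the diagram.
The counterclockwise rotation `i ↦ i + 1` at each crossing together with `edge`
determines the (cellular) embedding of the diagram into a closed orientable surface;
the diagram lies on the 2-sphere `S²` exactly when Euler's formula `OnSphere` holds.
`over c = true` means that the strand `{0, 2}` is the overstrand at the crossing `c`.
-/

/-- The darts (edge-ends) of a link diagram with crossing set `C`. -/
abbrev LinkDiagram.Dart (C : Type) : Type := C × Fin 4

/-- A link diagram: a 4-valent graph with over/under information at each vertex,
together with the counterclockwise rotation system embedding it in a surface. -/
structure LinkDiagram (C : Type) where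
  finite : Finite C
  edge : Equiv.Perm (LinkDiagram.Dart C)
  edge_invol : ∀ h, edge (edge h) = h
  edge_ne : ∀ h, edge h ≠ h
  over' : C → Bool

namespace LinkDiagram

variable {C : Type}

/-- Counterclockwise rotation of the darts around each crossing. -/
def rotPerm (C : Type) : Equiv.Perm (Dart C) :=
  Equiv.prodCongr (Equiv.refl C) (finRotate 4)

/-- The face permutation of the embedded diagram; its orbits are the faces
(the connected components of the complement of the diagram in the surface). -/
def facePerm (D : LinkDiagram C) : Equiv.Perm (Dart C) := D.edge.trans (rotPerm C)

/-- The darts `h` and `h'` have the same face of the diagram on their left. -/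
def SameFace (D : LinkDiagram C) (h h' : Dart C) : Prop := D.facePerm.SameCycle h h'

/-- The number of faces of the diagram on its surface. -/
noncomputable def faceCount (D : LinkDiagram C) : ℕ :=
  Nat.card (Quot (fun h h' : Dart C => D.facePerm h = h'))

/-- The number of crossings `c(D)`. -/
noncomputable def crossingCount (D : LinkDiagram C) : ℕ := Nat.card C

/-- The pairing of darts at each crossing given by the `A`-smoothing. -/
def smoothA (D : LinkDiagram C) : Equiv.Perm (Dart C) :=
  Function.Involutive.toPerm (fun h => (h.1, (if D.over' h.1 then (1 : Fin 4) else 3) - h.2))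
    (by rintro ⟨c, i⟩; simp [sub_sub_cancel])

/-- The pairing of darts at each crossing given by the `B`-smoothing. -/
def smoothB (D : LinkDiagram C) : Equiv.Perm (Dart C) :=
  Function.Involutive.toPerm (fun h => (h.1, (if D.over' h.1 then (3 : Fin 4) else 1) - h.2))
    (by rintro ⟨c, i⟩; simp [sub_sub_cancel])

/-- Traversal permutation of the all-`A` state `s_A`: its orbits are the directed
state circles of `s_A` (each circle is traversed by exactly two orbits). -/
def circPermA (D : LinkDiagram C) : Equiv.Perm (Dart C) := D.edge.trans D.smoothA

/-- Traversal permutation of the all-`B` state `s_B`. -/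
def circPermB (D : LinkDiagram C) : Equiv.Perm (Dart C) := D.edge.trans D.smoothB

/-- `|s_A|`: the number of circles of the all-`A` state. -/
noncomputable def sA (D : LinkDiagram C) : ℕ :=
  Nat.card (Quot (fun h h' : Dart C => D.circPermA h = h')) / 2

/-- `|s_B|`: the number of circles of the all-`B` state. -/
noncomputable def sB (D : LinkDiagram C) : ℕ :=
  Nat.card (Quot (fun h h' : Dart C => D.circPermB h = h')) / 2

/-- The Turaev genus of the diagram: `g_T(D) = (c(D) + 2 - |s_A| - |s_B|) / 2`,
the genus of the Turaev surface `F(D)`. -/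
noncomputable def gT (D : LinkDiagram C) : ℕ :=
  (D.crossingCount + 2 - (D.sA + D.sB)) / 2

/-- The genus of the closed orientable surface in which the diagram is cellularly
embedded by its rotation system (Euler's formula). -/
noncomputable def genus (D : LinkDiagram C) : ℕ :=
  (D.crossingCount + 2 - D.faceCount) / 2

/-- The diagram lies on the 2-sphere `S²` (Euler's formula). -/
def OnSphere (D : LinkDiagram C) : Prop := D.faceCount = D.crossingCount + 2

/-- The end of an edge represented by the dart `h` is an overpass. -/
def overDart (D : LinkDiagram C) (h : Dart C) : Bool :=
  D.over' h.1 == decide (h.2.val % 2 = 0)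

/-- The edge containing the dart `h` is alternating: one of its ends is an overpass
and the other an underpass. -/
def IsAltEdge (D : LinkDiagram C) (h : Dart C) : Prop :=
  D.overDart h ≠ D.overDart (D.edge h)

/-- The diagram is alternating: every edge is alternating. -/
def IsAlternating (D : LinkDiagram C) : Prop := ∀ h : Dart C, D.IsAltEdge h

/-- Two crossings are adjacent when some edge of the diagram joins them. -/
def Adj (D : LinkDiagram C) (a b : C) : Prop := ∃ h : Dart C, h.1 = a ∧ (D.edge h).1 = b

/-- The diagram is connected. -/
def Connected (D : LinkDiagram C) : Prop := ∀ a b : C, Relation.ReflTransGen D.Adj a b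

/-- A composite circle of the diagram on `S²`: a simple loop meeting the diagram
transversally in two points and having crossings on both sides.  Combinatorially such
a loop crosses two distinct edges which lie on a common pair of faces (the loop runs
through the face to the left of `h` and `h'` and through the face to the left of
`edge h` and `edge h'`); since each of the two edges has one endpoint on each side of
the loop, there are automatically crossings on both sides. -/
structure CompositeCircle (D : LinkDiagram C) where
  h : Dart C
  h' : Dart C
  ne_self : h' ≠ h
  ne_edge : h' ≠ D.edge h
  same_face : D.SameFace h h'
  same_face' : D.SameFace (D.edge h) (D.edge h')

/-- The four darts of the two edges crossed by a composite circle;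
two composite circles are regarded as the same circle when these coincide. -/
def CompositeCircle.EdgeSet {D : LinkDiagram C} (κ : D.CompositeCircle) : Set (Dart C) :=
  {κ.h, D.edge κ.h, κ.h', D.edge κ.h'}

/-- The composite circle `κ` passes through (intersects) the face to the left of `x`. -/
def FaceMeets (D : LinkDiagram C) (κ : D.CompositeCircle) (x : Dart C) : Prop :=
  D.SameFace κ.h x ∨ D.SameFace (D.edge κ.h) x

/-- The diagram is prime: every simple loop on `S² − {crossings}` which intersects the
diagram in two points bounds a disc containing no crossings, i.e. there is no
composite circle. -/
def IsPrime (D : LinkDiagram C) : Prop := IsEmpty D.CompositeCircle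

/-- The darts `h` and `h'` lie on the same (undirected) circle of the all-`A` state. -/
def SameCircleA (D : LinkDiagram C) (h h' : Dart C) : Prop :=
  D.circPermA.SameCycle h h' ∨ D.circPermA.SameCycle h (D.edge h')

/-- The darts `h` and `h'` lie on the same (undirected) circle of the all-`B` state. -/
def SameCircleB (D : LinkDiagram C) (h h' : Dart C) : Prop :=
  D.circPermB.SameCycle h h' ∨ D.circPermB.SameCycle h (D.edge h')

/-- The crossing `c` is an `A`-loop crossing: the corresponding edge of the all-`A`
ribbon graph is a loop, i.e. both smoothed arcs at `c` lie on one state circle. -/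
def IsALoopCrossing (D : LinkDiagram C) (c : C) : Prop := D.SameCircleA (c, 0) (c, 2)

/-- The crossing `c` is a `B`-loop crossing. -/
def IsBLoopCrossing (D : LinkDiagram C) (c : C) : Prop := D.SameCircleB (c, 0) (c, 2)

/-- An adequate diagram: no loop crossings. -/
def IsAdequateDiagram (D : LinkDiagram C) : Prop :=
  ∀ c : C, ¬ D.IsALoopCrossing c ∧ ¬ D.IsBLoopCrossing c

/-- A semi-adequate diagram: no `A`-loop crossings or no `B`-loop crossings. -/
def IsSemiAdequateDiagram (D : LinkDiagram C) : Prop :=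
  (∀ c : C, ¬ D.IsALoopCrossing c) ∨ (∀ c : C, ¬ D.IsBLoopCrossing c)

/-- The diagram obtained by changing the crossing `c`. -/
noncomputable def crossingChange (D : LinkDiagram C) (c : C) : LinkDiagram C := by
  classical
  exact { finite := D.finite
          edge := D.edge
          edge_invol := D.edge_invol
          edge_ne := D.edge_ne
          over' := fun x => if x = c then !(D.over' x) else D.over' x }

/-- An almost-alternating diagram: one crossing change makes the diagram alternating. -/
def IsAlmostAlternatingDiagram (D : LinkDiagram C) : Prop :=
  ∃ c : C, (D.crossingChange c).IsAlternating

/-- Surgery of the diagram along a simple arc `τ` with `∂τ = τ ∩ D`, where `τ` runs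
inside the face to the left of the darts `a` and `b` from the interior of the edge of
`a` to the interior of the edge of `b`:  both edges are cut at their midpoints and
reconnected along the two sides of the arc. -/
noncomputable def arcSurgery (D : LinkDiagram C) (a b : Dart C) : LinkDiagram C := by
  classical
  refine { finite := D.finite
           edge := (Equiv.swap a b).trans (D.edge.trans (Equiv.swap a b))
           edge_invol := ?_
           edge_ne := ?_
           over' := D.over' }
  · intro h
    simp [Equiv.trans_apply, Equiv.swap_apply_self, D.edge_invol]
  · intro h hcon
    simp only [Equiv.trans_apply] at hcon
    have h1 : D.edge ((Equiv.swap a b) h) = (Equiv.swap a b) h := by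
      have h2 := congrArg (Equiv.swap a b) hcon
      simpa [Equiv.swap_apply_self] using h2
    exact D.edge_ne _ h1

/-- A checkerboard coloring of the faces of the diagram: `col h` is the color of
the face to the left of the dart `h` (`false` = black, `true` = white); faces sharing
an edge get opposite colors. -/
structure Checkerboard (D : LinkDiagram C) where
  col : Dart C → Bool
  col_face : ∀ h h' : Dart C, D.SameFace h h' → col h = col h'
  col_edge : ∀ h : Dart C, col (D.edge h) = !(col h)

/-- A cutting arc of the diagram: a simple arc `δ` on `S²` with `∂δ = δ ∩ D ∩ α ∩ β`
for a state circle `α ⊂ s_A` and a state circle `β ⊂ s_B` (the states being isotoped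
so that `s_A ∩ s_B ∩ D` is the set of midpoints of the non-alternating edges).
Combinatorially: `δ` runs inside the face to the left of the darts `a` and `b`,
joining the midpoints of the two distinct non-alternating edges containing `a` and
`b`, which lie on one common `A`-circle `α` and one common `B`-circle `β`. -/
structure CuttingArc (D : LinkDiagram C) where
  a : Dart C
  b : Dart C
  ne_self : b ≠ a
  ne_edge : b ≠ D.edge a
  nonalt_a : ¬ D.IsAltEdge a
  nonalt_b : ¬ D.IsAltEdge b
  same_face : D.SameFace a b
  same_circleA : D.SameCircleA a b
  same_circleB : D.SameCircleB a b

/-- The diagram obtained by surgery along a cutting arc. -/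
noncomputable def surgered (D : LinkDiagram C) (δ : D.CuttingArc) : LinkDiagram C :=
  D.arcSurgery δ.a δ.b

/-- Two crossings joined by an alternating edge. -/
def AltAdj (D : LinkDiagram C) (a b : C) : Prop :=
  ∃ h : Dart C, D.IsAltEdge h ∧ h.1 = a ∧ (D.edge h).1 = b

/-- Two crossings lie in the same maximally connected alternating tangle of the
diagram (the maximal pieces of the alternating tangle structure). -/
def SameTangle (D : LinkDiagram C) (a b : C) : Prop :=
  Quot.mk D.AltAdj a = Quot.mk D.AltAdj b

/-- The number of maximally connected alternating tangles of the diagram. -/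
noncomputable def tangleCount (D : LinkDiagram C) : ℕ := Nat.card (Quot D.AltAdj)

/-- Twice the number of strand endpoints of the maximally connected alternating tangle
of `c`: the number of darts of non-alternating edges emanating from the tangle.
An alternating `k`-tangle has arity `2 * k`. -/
noncomputable def tangleArity (D : LinkDiagram C) (c : C) : ℕ :=
  {h : Dart C | ¬ D.IsAltEdge h ∧ D.SameTangle c h.1}.ncard

/-- The number of (non-alternating) edges in the channel region joining the tangle
of `c` to the tangle of `c'`. -/
noncomputable def tangleConn (D : LinkDiagram C) (c c' : C) : ℕ :=
  {h : Dart C | ¬ D.IsAltEdge h ∧ D.SameTangle c h.1 ∧ D.SameTangle c' ((D.edge h).1)}.ncard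

/-- The alternating tangle structure of the diagram is a cycle of alternating
2-tangles: (i) every maximally connected alternating tangle is a pair of a disc and
an alternating 2-tangle (it has exactly four strand-endpoints, and no non-alternating
edge returns to the tangle it leaves), and (ii) any pair of maximally connected
alternating tangles is connected by either two arcs or zero arcs in the channel
region. -/
def IsCycleOfAlternating2Tangles (D : LinkDiagram C) : Prop :=
  (∀ h : Dart C, ¬ D.IsAltEdge h → ¬ D.SameTangle h.1 ((D.edge h).1)) ∧
  (∀ c : C, D.tangleArity c = 4) ∧
  (∀ c c' : C, ¬ D.SameTangle c c' → D.tangleConn c c' = 0 ∨ D.tangleConn c c' = 2)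

/-- The crossing `c` is nugatory: two opposite local faces at `c` coincide. -/
def IsNugatory (D : LinkDiagram C) (c : C) : Prop :=
  D.SameFace (c, 0) (c, 2) ∨ D.SameFace (c, 1) (c, 3)

/-- A reduced diagram: no nugatory crossings. -/
def IsReduced (D : LinkDiagram C) : Prop := ∀ c : C, ¬ D.IsNugatory c

/-- The face to the left of `h` is a bigon. -/
def IsBigonFace (D : LinkDiagram C) (h : Dart C) : Prop :=
  D.facePerm (D.facePerm h) = h ∧ D.facePerm h ≠ h

/-- The maximally connected alternating tangle of `c` is a twist region:
every edge joining two crossings of the tangle lies on a bigon face. -/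
def TangleIsTwistRegion (D : LinkDiagram C) (c : C) : Prop :=
  ∀ h : Dart C, D.IsAltEdge h → D.SameTangle c h.1 →
    (D.IsBigonFace h ∨ D.IsBigonFace (D.edge h))

end LinkDiagram

section AuxProof

open Equiv Equiv.Perm

namespace LinkDiagram

variable {C : Type} (D : LinkDiagram C) (δ : D.CuttingArc)

private lemma aux_ne_ea_a : D.edge δ.a ≠ δ.a := D.edge_ne _

private lemma aux_ne_ea_b : D.edge δ.a ≠ δ.b := fun e => δ.ne_edge e.symm

private lemma aux_ne_eb_b : D.edge δ.b ≠ δ.b := D.edge_ne _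

private lemma aux_ne_eb_a : D.edge δ.b ≠ δ.a := by
  intro e
  apply δ.ne_edge
  have := congrArg D.edge e
  rwa [D.edge_invol] at this

private lemma aux_E1_a : (D.surgered δ).edge δ.a = D.edge δ.b := by
  classical
  simp only [LinkDiagram.surgered, LinkDiagram.arcSurgery, Equiv.trans_apply]
  rw [Equiv.swap_apply_left,
    Equiv.swap_apply_of_ne_of_ne (aux_ne_eb_a D δ) (aux_ne_eb_b D δ)]

private lemma aux_E1_b : (D.surgered δ).edge δ.b = D.edge δ.a := by
  classical
  simp only [LinkDiagram.surgered, LinkDiagram.arcSurgery, Equiv.trans_apply]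
  rw [Equiv.swap_apply_right,
    Equiv.swap_apply_of_ne_of_ne (aux_ne_ea_a D δ) (aux_ne_ea_b D δ)]

private lemma aux_E1_ea : (D.surgered δ).edge (D.edge δ.a) = δ.b := by
  classical
  simp only [LinkDiagram.surgered, LinkDiagram.arcSurgery, Equiv.trans_apply]
  rw [Equiv.swap_apply_of_ne_of_ne (aux_ne_ea_a D δ) (aux_ne_ea_b D δ),
    D.edge_invol, Equiv.swap_apply_left]

private lemma aux_E1_eb : (D.surgered δ).edge (D.edge δ.b) = δ.a := by
  classical
  simp only [LinkDiagram.surgered, LinkDiagram.arcSurgery, Equiv.trans_apply]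
  rw [Equiv.swap_apply_of_ne_of_ne (aux_ne_eb_a D δ) (aux_ne_eb_b D δ),
    D.edge_invol, Equiv.swap_apply_right]

private lemma aux_E1_other {h : Dart C} (h1 : h ≠ δ.a) (h2 : h ≠ δ.b)
    (h3 : h ≠ D.edge δ.a) (h4 : h ≠ D.edge δ.b) :
    (D.surgered δ).edge h = D.edge h := by
  classical
  simp only [LinkDiagram.surgered, LinkDiagram.arcSurgery, Equiv.trans_apply]
  rw [Equiv.swap_apply_of_ne_of_ne h1 h2,
    Equiv.swap_apply_of_ne_of_ne
      (fun e => h3 (by simpa [D.edge_invol] using congrArg D.edge e))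
      (fun e => h4 (by simpa [D.edge_invol] using congrArg D.edge e))]

private lemma aux_f1_a : (D.surgered δ).facePerm δ.a = D.facePerm δ.b :=
  congrArg (rotPerm C) (aux_E1_a D δ)

private lemma aux_f1_b : (D.surgered δ).facePerm δ.b = D.facePerm δ.a :=
  congrArg (rotPerm C) (aux_E1_b D δ)

private lemma aux_f1_ea : (D.surgered δ).facePerm (D.edge δ.a) = D.facePerm (D.edge δ.b) :=
  congrArg (rotPerm C) ((aux_E1_ea D δ).trans (D.edge_invol δ.b).symm)

private lemma aux_f1_eb : (D.surgered δ).facePerm (D.edge δ.b) = D.facePerm (D.edge δ.a) :=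
  congrArg (rotPerm C) ((aux_E1_eb D δ).trans (D.edge_invol δ.a).symm)

private lemma aux_f1_other {h : Dart C} (h1 : h ≠ δ.a) (h2 : h ≠ δ.b)
    (h3 : h ≠ D.edge δ.a) (h4 : h ≠ D.edge δ.b) :
    (D.surgered δ).facePerm h = D.facePerm h :=
  congrArg (rotPerm C) (aux_E1_other D δ h1 h2 h3 h4)

private lemma aux_col_b (col : D.Checkerboard) (hblack : col.col δ.a = false) :
    col.col δ.b = false := by
  rw [← col.col_face δ.a δ.b δ.same_face]; exact hblack

private lemma aux_col_ea (col : D.Checkerboard) (hblack : col.col δ.a = false) :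
    col.col (D.edge δ.a) = true := by
  rw [col.col_edge, hblack]; rfl

private lemma aux_col_eb (col : D.Checkerboard) (hblack : col.col δ.a = false) :
    col.col (D.edge δ.b) = true := by
  rw [col.col_edge, aux_col_b D δ col hblack]; rfl

private lemma aux_notW (hprime : D.IsPrime) :
    ¬ D.facePerm.SameCycle (D.edge δ.a) (D.edge δ.b) :=
  fun hs => hprime.false ⟨δ.a, δ.b, δ.ne_self, δ.ne_edge, δ.same_face, hs⟩

/-- The two white faces are joined into a single face of the surgered diagram. -/
private lemma aux_join (hprime : D.IsPrime) (col : D.Checkerboard)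
    (hblack : col.col δ.a = false) :
    (D.surgered δ).facePerm.SameCycle (D.edge δ.a) (D.edge δ.b) := by
  classical
  have hfin : Finite (Dart C) := by have := D.finite; infer_instance
  have hP : ∃ n, 0 < n ∧ (D.facePerm ^ n) (D.edge δ.b) = D.edge δ.b := by
    refine ⟨orderOf D.facePerm, orderOf_pos _, ?_⟩
    rw [pow_orderOf_eq_one]; rfl
  obtain ⟨hm0, hmfix⟩ := Nat.find_spec hP
  have key : ∀ k, k + 1 ≤ Nat.find hP →
      ((D.surgered δ).facePerm ^ k) (D.facePerm (D.edge δ.b)) =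
        (D.facePerm ^ (k + 1)) (D.edge δ.b) := by
    intro k
    induction k with
    | zero => intro _; simp
    | succ k ih =>
      intro hk
      have hkey := ih (by omega)
      have hyc : D.facePerm.SameCycle (D.edge δ.b) ((D.facePerm ^ (k + 1)) (D.edge δ.b)) :=
        ⟨((k : ℤ) + 1), by rw [show ((k : ℤ) + 1) = ((k + 1 : ℕ) : ℤ) by push_cast; ring,
          zpow_natCast]⟩
      have hy_eb : (D.facePerm ^ (k + 1)) (D.edge δ.b) ≠ D.edge δ.b := by
        intro e
        exact Nat.find_min hP (by omega) ⟨Nat.succ_pos k, e⟩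
      have hy_a : (D.facePerm ^ (k + 1)) (D.edge δ.b) ≠ δ.a := by
        intro e
        rw [e] at hyc
        have hsf : D.SameFace (D.edge δ.b) δ.a := hyc
        have hc := col.col_face _ _ hsf
        rw [aux_col_eb D δ col hblack, hblack] at hc
        exact Bool.noConfusion hc
      have hy_b : (D.facePerm ^ (k + 1)) (D.edge δ.b) ≠ δ.b := by
        intro e
        rw [e] at hyc
        have hsf : D.SameFace (D.edge δ.b) δ.b := hyc
        have hc := col.col_face _ _ hsf
        rw [aux_col_eb D δ col hblack, aux_col_b D δ col hblack] at hc
        exact Bool.noConfusion hc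
      have hy_ea : (D.facePerm ^ (k + 1)) (D.edge δ.b) ≠ D.edge δ.a := by
        intro e
        rw [e] at hyc
        exact aux_notW D δ hprime hyc.symm
      rw [pow_succ', Equiv.Perm.mul_apply, hkey,
        aux_f1_other D δ hy_a hy_b hy_ea hy_eb, pow_succ' D.facePerm (k + 1),
        Equiv.Perm.mul_apply]
  have h1 : ((D.surgered δ).facePerm ^ (Nat.find hP - 1)) (D.facePerm (D.edge δ.b)) =
      D.edge δ.b := by
    rw [key (Nat.find hP - 1) (by omega), show Nat.find hP - 1 + 1 = Nat.find hP by omega,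
      hmfix]
  have h2 : (D.surgered δ).facePerm.SameCycle ((D.surgered δ).facePerm (D.edge δ.a))
      (D.edge δ.b) := by
    rw [aux_f1_ea]
    exact ⟨((Nat.find hP - 1 : ℕ) : ℤ), by rw [zpow_natCast]; exact h1⟩
  exact Equiv.Perm.sameCycle_apply_left.mp h2

private lemma aux_step (x : Dart C) (h1 : x ≠ D.edge δ.a) (h2 : x ≠ D.edge δ.b) :
    D.facePerm.SameCycle x ((D.surgered δ).facePerm x) := by
  classical
  by_cases ha : x = δ.a
  · subst ha
    rw [aux_f1_a]
    have hab : D.facePerm.SameCycle δ.a δ.b := δ.same_face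
    exact hab.apply_right
  by_cases hb : x = δ.b
  · subst hb
    rw [aux_f1_b]
    have hab : D.facePerm.SameCycle δ.a δ.b := δ.same_face
    exact hab.symm.apply_right
  · rw [aux_f1_other D δ ha hb h1 h2]
    exact (Equiv.Perm.SameCycle.refl _ _).apply_right

private lemma aux_transfer_pow (hprime : D.IsPrime) (col : D.Checkerboard)
    (hblack : col.col δ.a = false) (x : Dart C)
    (hx : ¬ (D.surgered δ).facePerm.SameCycle x (D.edge δ.a)) :
    ∀ n : ℕ, D.facePerm.SameCycle x (((D.surgered δ).facePerm ^ n) x) := by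
  intro n
  induction n with
  | zero => simpa using Equiv.Perm.SameCycle.refl D.facePerm x
  | succ n ih =>
    have hy1 : ((D.surgered δ).facePerm ^ n) x ≠ D.edge δ.a := by
      intro e
      exact hx ⟨(n : ℤ), by rw [zpow_natCast]; exact e⟩
    have hy2 : ((D.surgered δ).facePerm ^ n) x ≠ D.edge δ.b := by
      intro e
      have hsc : (D.surgered δ).facePerm.SameCycle x (D.edge δ.b) :=
        ⟨(n : ℤ), by rw [zpow_natCast]; exact e⟩
      exact hx (hsc.trans (aux_join D δ hprime col hblack).symm)
    rw [pow_succ', Equiv.Perm.mul_apply]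
    exact ih.trans (aux_step D δ _ hy1 hy2)

private lemma aux_transfer (hprime : D.IsPrime) (col : D.Checkerboard)
    (hblack : col.col δ.a = false) {x y : Dart C}
    (hx : ¬ (D.surgered δ).facePerm.SameCycle x (D.edge δ.a))
    (hxy : (D.surgered δ).facePerm.SameCycle x y) : D.facePerm.SameCycle x y := by
  have hfin : Finite (Dart C) := by have := D.finite; infer_instance
  obtain ⟨i, -, rfl⟩ := hxy.exists_pow_eq'
  exact aux_transfer_pow D δ hprime col hblack x hx i

private lemma aux_wsplit_pow (hprime : D.IsPrime) (col : D.Checkerboard)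
    (hblack : col.col δ.a = false) :
    ∀ n : ℕ,
      D.facePerm.SameCycle (D.edge δ.a) (((D.surgered δ).facePerm ^ n) (D.edge δ.a)) ∨
      D.facePerm.SameCycle (D.edge δ.b) (((D.surgered δ).facePerm ^ n) (D.edge δ.a)) := by
  intro n
  induction n with
  | zero => left; simpa using Equiv.Perm.SameCycle.refl D.facePerm (D.edge δ.a)
  | succ n ih =>
    rw [pow_succ', Equiv.Perm.mul_apply]
    by_cases ha : ((D.surgered δ).facePerm ^ n) (D.edge δ.a) = δ.a
    · exfalso
      rw [ha] at ih
      rcases ih with h | h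
      · have hsf : D.SameFace (D.edge δ.a) δ.a := h
        have hc := col.col_face _ _ hsf
        rw [aux_col_ea D δ col hblack, hblack] at hc
        exact Bool.noConfusion hc
      · have hsf : D.SameFace (D.edge δ.b) δ.a := h
        have hc := col.col_face _ _ hsf
        rw [aux_col_eb D δ col hblack, hblack] at hc
        exact Bool.noConfusion hc
    · by_cases hb : ((D.surgered δ).facePerm ^ n) (D.edge δ.a) = δ.b
      · exfalso
        rw [hb] at ih
        rcases ih with h | h
        · have hsf : D.SameFace (D.edge δ.a) δ.b := h
          have hc := col.col_face _ _ hsf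
          rw [aux_col_ea D δ col hblack, aux_col_b D δ col hblack] at hc
          exact Bool.noConfusion hc
        · have hsf : D.SameFace (D.edge δ.b) δ.b := h
          have hc := col.col_face _ _ hsf
          rw [aux_col_eb D δ col hblack, aux_col_b D δ col hblack] at hc
          exact Bool.noConfusion hc
      · by_cases hea : ((D.surgered δ).facePerm ^ n) (D.edge δ.a) = D.edge δ.a
        · right
          rw [hea, aux_f1_ea]
          exact (Equiv.Perm.SameCycle.refl _ _).apply_right
        · by_cases heb : ((D.surgered δ).facePerm ^ n) (D.edge δ.a) = D.edge δ.b
          · left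
            rw [heb, aux_f1_eb]
            exact (Equiv.Perm.SameCycle.refl _ _).apply_right
          · rw [aux_f1_other D δ ha hb hea heb]
            exact ih.imp Equiv.Perm.SameCycle.apply_right Equiv.Perm.SameCycle.apply_right

private lemma aux_wsplit (hprime : D.IsPrime) (col : D.Checkerboard)
    (hblack : col.col δ.a = false) {z : Dart C}
    (hz : (D.surgered δ).facePerm.SameCycle (D.edge δ.a) z) :
    D.facePerm.SameCycle (D.edge δ.a) z ∨ D.facePerm.SameCycle (D.edge δ.b) z := by
  have hfin : Finite (Dart C) := by have := D.finite; infer_instance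
  obtain ⟨i, -, rfl⟩ := hz.exists_pow_eq'
  exact aux_wsplit_pow D δ hprime col hblack i

private lemma aux_match (hprime : D.IsPrime) (col : D.Checkerboard) {e u v : Dart C}
    (he : col.col e = true) (huv : D.facePerm.SameCycle u v)
    (hu : D.facePerm.SameCycle (D.edge u) e) (hv : D.facePerm.SameCycle (D.edge v) e) :
    u = v := by
  classical
  by_contra hne
  by_cases hvu : v = D.edge u
  · have hs1 : D.SameFace (D.edge u) e := hu
    have h1 : col.col (D.edge u) = true := (col.col_face _ _ hs1).trans he
    have hs2 : D.SameFace (D.edge v) e := hv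
    have h2 : col.col (D.edge v) = true := (col.col_face _ _ hs2).trans he
    rw [hvu, D.edge_invol] at h2
    rw [col.col_edge, h2] at h1
    exact Bool.noConfusion h1
  · exact hprime.false ⟨u, v, fun e' => hne e'.symm, hvu, huv, hu.trans hv.symm⟩

end LinkDiagram

end AuxProof

/-- **Claims 11 and 12 in the proof of Theorem 10** (Kim). Let `δ` be a cutting arc of
a prime non-alternating connected link diagram `D` on `S²`, lying in a black face `B`
adjacent to the white faces `W` and `W′` meeting `∂δ`, and let `D₁` be the diagram
obtained by surgery along `δ` (which joins `W` and `W′` into a single white face `W₁`,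
the face of `D₁` to the left of the dart `D.edge δ.a`).  Then every composite circle
of `D₁` intersects `W₁`, and every black face of `D₁` intersects at most one composite
circle of `D₁`. -/
theorem surgered_composite_circles_meet_white_face {C : Type} (D : LinkDiagram C)
    (hconn : D.Connected) (hsphere : D.OnSphere) (hprime : D.IsPrime)
    (hnonalt : ¬ D.IsAlternating)
    (col : D.Checkerboard) (δ : D.CuttingArc) (hblack : col.col δ.a = false)
    (col₁ : (D.surgered δ).Checkerboard)
    (hW₁ : col₁.col (D.edge δ.a) = true) :
    (∀ κ : (D.surgered δ).CompositeCircle,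
        (D.surgered δ).FaceMeets κ (D.edge δ.a)) ∧
    (∀ x : LinkDiagram.Dart C, col₁.col x = false →
      ∀ κ κ' : (D.surgered δ).CompositeCircle,
        (D.surgered δ).FaceMeets κ x → (D.surgered δ).FaceMeets κ' x →
        κ.EdgeSet = κ'.EdgeSet) := by
  classical
  have hJ := LinkDiagram.aux_join D δ hprime col hblack
  have claim1 : ∀ κ : (D.surgered δ).CompositeCircle,
      (D.surgered δ).FaceMeets κ (D.edge δ.a) := by
    intro κ
    by_contra hnc
    have hnc' : ¬ ((D.surgered δ).facePerm.SameCycle κ.h (D.edge δ.a) ∨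
        (D.surgered δ).facePerm.SameCycle ((D.surgered δ).edge κ.h) (D.edge δ.a)) := hnc
    push_neg at hnc'
    obtain ⟨hn1, hn2⟩ := hnc'
    have hsf : (D.surgered δ).facePerm.SameCycle κ.h κ.h' := κ.same_face
    have hsf' : (D.surgered δ).facePerm.SameCycle ((D.surgered δ).edge κ.h)
        ((D.surgered δ).edge κ.h') := κ.same_face'
    have hn1' : ¬ (D.surgered δ).facePerm.SameCycle κ.h' (D.edge δ.a) :=
      fun s => hn1 (hsf.trans s)
    have hn2' : ¬ (D.surgered δ).facePerm.SameCycle ((D.surgered δ).edge κ.h') (D.edge δ.a) :=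
      fun s => hn2 (hsf'.trans s)
    have hspec : ∀ z : LinkDiagram.Dart C,
        ¬ (D.surgered δ).facePerm.SameCycle z (D.edge δ.a) →
        ¬ (D.surgered δ).facePerm.SameCycle ((D.surgered δ).edge z) (D.edge δ.a) →
        z ≠ δ.a ∧ z ≠ δ.b ∧ z ≠ D.edge δ.a ∧ z ≠ D.edge δ.b := by
      intro z u1 u2
      refine ⟨?_, ?_, ?_, ?_⟩
      · rintro rfl
        exact u2 (by rw [LinkDiagram.aux_E1_a]; exact hJ.symm)
      · rintro rfl
        exact u2 (by rw [LinkDiagram.aux_E1_b])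
      · rintro rfl
        exact u1 (Equiv.Perm.SameCycle.refl _ _)
      · rintro rfl
        exact u1 hJ.symm
    obtain ⟨ha, hb, hea, heb⟩ := hspec κ.h hn1 hn2
    obtain ⟨ha', hb', hea', heb'⟩ := hspec κ.h' hn1' hn2'
    have hE : (D.surgered δ).edge κ.h = D.edge κ.h :=
      LinkDiagram.aux_E1_other D δ ha hb hea heb
    have hE' : (D.surgered δ).edge κ.h' = D.edge κ.h' :=
      LinkDiagram.aux_E1_other D δ ha' hb' hea' heb'
    rw [hE, hE'] at hsf'
    rw [hE] at hn2
    refine hprime.false ⟨κ.h, κ.h', κ.ne_self, ?_, ?_, ?_⟩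
    · rw [← hE]; exact κ.ne_edge
    · exact LinkDiagram.aux_transfer D δ hprime col hblack hn1 hsf
    · exact LinkDiagram.aux_transfer D δ hprime col hblack hn2 hsf'
  refine ⟨claim1, ?_⟩
  intro x hxcol κ κ' hkx hkx'
  have hxW : ¬ (D.surgered δ).facePerm.SameCycle x (D.edge δ.a) := by
    intro s
    have hsf : (D.surgered δ).SameFace x (D.edge δ.a) := s
    have hc := col₁.col_face _ _ hsf
    rw [hxcol, hW₁] at hc
    exact Bool.noConfusion hc
  have norm : ∀ κ₀ : (D.surgered δ).CompositeCircle, (D.surgered δ).FaceMeets κ₀ x →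
      ∃ u u' : LinkDiagram.Dart C, u' ≠ u ∧
        (D.surgered δ).facePerm.SameCycle u x ∧
        (D.surgered δ).facePerm.SameCycle u' x ∧
        (D.surgered δ).facePerm.SameCycle ((D.surgered δ).edge u) (D.edge δ.a) ∧
        (D.surgered δ).facePerm.SameCycle ((D.surgered δ).edge u') (D.edge δ.a) ∧
        κ₀.EdgeSet = {u, (D.surgered δ).edge u, u', (D.surgered δ).edge u'} := by
    intro κ₀ hm
    have hm' : (D.surgered δ).facePerm.SameCycle κ₀.h x ∨
        (D.surgered δ).facePerm.SameCycle ((D.surgered δ).edge κ₀.h) x := hm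
    have hc1 : (D.surgered δ).facePerm.SameCycle κ₀.h (D.edge δ.a) ∨
        (D.surgered δ).facePerm.SameCycle ((D.surgered δ).edge κ₀.h) (D.edge δ.a) := claim1 κ₀
    have hsf : (D.surgered δ).facePerm.SameCycle κ₀.h κ₀.h' := κ₀.same_face
    have hsf' : (D.surgered δ).facePerm.SameCycle ((D.surgered δ).edge κ₀.h)
        ((D.surgered δ).edge κ₀.h') := κ₀.same_face'
    rcases hm' with hmh | hmh
    · have hside : (D.surgered δ).facePerm.SameCycle ((D.surgered δ).edge κ₀.h)
          (D.edge δ.a) := by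
        rcases hc1 with h | h
        · exact absurd (hmh.symm.trans h) hxW
        · exact h
      exact ⟨κ₀.h, κ₀.h', κ₀.ne_self, hmh, hsf.symm.trans hmh, hside,
        hsf'.symm.trans hside, rfl⟩
    · have hside : (D.surgered δ).facePerm.SameCycle κ₀.h (D.edge δ.a) := by
        rcases hc1 with h | h
        · exact h
        · exact absurd (hmh.symm.trans h) hxW
      refine ⟨(D.surgered δ).edge κ₀.h, (D.surgered δ).edge κ₀.h',
        fun e => κ₀.ne_self ((D.surgered δ).edge.injective e), hmh,
        hsf'.symm.trans hmh, ?_, ?_, ?_⟩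
      · rw [(D.surgered δ).edge_invol]; exact hside
      · rw [(D.surgered δ).edge_invol]; exact hsf.symm.trans hside
      · ext z
        simp only [LinkDiagram.CompositeCircle.EdgeSet, Set.mem_insert_iff,
          Set.mem_singleton_iff, (D.surgered δ).edge_invol]
        tauto
  obtain ⟨u, u', huu, hux, hu'x, hue, hu'e, hEκ⟩ := norm κ hkx
  obtain ⟨v, v', hvv, hvx, hv'x, hve, hv'e, hEκ'⟩ := norm κ' hkx'
  have side : ∀ w : LinkDiagram.Dart C, (D.surgered δ).facePerm.SameCycle w x →
      (D.surgered δ).facePerm.SameCycle ((D.surgered δ).edge w) (D.edge δ.a) →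
      D.facePerm.SameCycle (D.edge w) (D.edge δ.a) ∨
      D.facePerm.SameCycle (D.edge w) (D.edge δ.b) := by
    intro w hwx hwe
    by_cases h1 : w = δ.a
    · left; rw [h1]
    by_cases h2 : w = δ.b
    · right; rw [h2]
    have h3 : w ≠ D.edge δ.a := by
      intro e; rw [e] at hwx; exact hxW hwx.symm
    have h4 : w ≠ D.edge δ.b := by
      intro e; rw [e] at hwx; exact hxW (hwx.symm.trans hJ.symm)
    rw [LinkDiagram.aux_E1_other D δ h1 h2 h3 h4] at hwe
    exact (LinkDiagram.aux_wsplit D δ hprime col hblack hwe.symm).imp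
      Equiv.Perm.SameCycle.symm Equiv.Perm.SameCycle.symm
  have hM : ∀ (w z e0 : LinkDiagram.Dart C), col.col e0 = true →
      (D.surgered δ).facePerm.SameCycle w x → (D.surgered δ).facePerm.SameCycle z x →
      D.facePerm.SameCycle (D.edge w) e0 → D.facePerm.SameCycle (D.edge z) e0 → w = z := by
    intro w z e0 he0 hwx hzx hw hz
    have h1 : D.facePerm.SameCycle x w :=
      LinkDiagram.aux_transfer D δ hprime col hblack hxW hwx.symm
    have h2 : D.facePerm.SameCycle x z :=
      LinkDiagram.aux_transfer D δ hprime col hblack hxW hzx.symm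
    exact LinkDiagram.aux_match D hprime col he0 (h1.symm.trans h2) hw hz
  have colea := LinkDiagram.aux_col_ea D δ col hblack
  have coleb := LinkDiagram.aux_col_eb D δ col hblack
  rw [hEκ, hEκ']
  rcases side u hux hue with pu | pu
  · have pu' : D.facePerm.SameCycle (D.edge u') (D.edge δ.b) := by
      rcases side u' hu'x hu'e with p | p
      · exact absurd (hM u u' _ colea hux hu'x pu p) (fun e => huu e.symm)
      · exact p
    rcases side v hvx hve with pv | pv
    · have huv : u = v := hM u v _ colea hux hvx pu pv
      have pv' : D.facePerm.SameCycle (D.edge v') (D.edge δ.b) := by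
        rcases side v' hv'x hv'e with p | p
        · exact absurd (hM v v' _ colea hvx hv'x pv p) (fun e => hvv e.symm)
        · exact p
      have hu'v' : u' = v' := hM u' v' _ coleb hu'x hv'x pu' pv'
      rw [huv, hu'v']
    · have hu'v : u' = v := hM u' v _ coleb hu'x hvx pu' pv
      have pv' : D.facePerm.SameCycle (D.edge v') (D.edge δ.a) := by
        rcases side v' hv'x hv'e with p | p
        · exact p
        · exact absurd (hM v v' _ coleb hvx hv'x pv p) (fun e => hvv e.symm)
      have huv' : u = v' := hM u v' _ colea hux hv'x pu pv'
      rw [huv', hu'v]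
      ext z
      simp only [Set.mem_insert_iff, Set.mem_singleton_iff]
      tauto
  · have pu' : D.facePerm.SameCycle (D.edge u') (D.edge δ.a) := by
      rcases side u' hu'x hu'e with p | p
      · exact p
      · exact absurd (hM u u' _ coleb hux hu'x pu p) (fun e => huu e.symm)
    rcases side v hvx hve with pv | pv
    · have hu'v : u' = v := hM u' v _ colea hu'x hvx pu' pv
      have pv' : D.facePerm.SameCycle (D.edge v') (D.edge δ.b) := by
        rcases side v' hv'x hv'e with p | p
        · exact absurd (hM v v' _ colea hvx hv'x pv p) (fun e => hvv e.symm)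
        · exact p
      have huv' : u = v' := hM u v' _ coleb hux hv'x pu pv'
      rw [huv', hu'v]
      ext z
      simp only [Set.mem_insert_iff, Set.mem_singleton_iff]
      tauto
    · have huv : u = v := hM u v _ coleb hux hvx pu pv
      have pv' : D.facePerm.SameCycle (D.edge v') (D.edge δ.a) := by
        rcases side v' hv'x hv'e with p | p
        · exact p
        · exact absurd (hM v v' _ coleb hvx hv'x pv p) (fun e => hvv e.symm)
      have hu'v' : u' = v' := hM u' v' _ colea hu'x hv'x pu' pv'
      rw [huv, hu'v']
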